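/- Let n be even with n ≥ 8 and let H be any simple graph on n/2 vertices. Then the join G = H ∨ (K̄_{(n−4)/2} ∪ K₂) is not 2-vertex-fault hamiltonian: deleting any two vertices of the H-side from G leaves a non-hamiltonian graph. -/

import Mathlib

/-! After deleting two vertices of `H`, the `n / 2` vertices on the other side span only the edge
of `K₂`, while just `n / 2 - 2` vertices of `H` remain. Every edge of a Hamiltonian cycle either
meets one of these `H`-vertices, each of which lies on exactly two cycle edges, or is the edge of
`K₂`; so the cycle has at most `2 (n / 2 - 2) + 1 = n - 3` edges, fewer than the `n - 2` vertices
it has to visit. -/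

open SimpleGraph

set_option linter.unusedVariables false

/-- The degree of a vertex: the number of its neighbors. -/
noncomputable def deg {α : Type*} (G : SimpleGraph α) (v : α) : ℕ :=
  (G.neighborSet v).ncard

/-- The join of two (disjoint) graphs: both graphs together with all cross edges. -/
def gJoin {α β : Type*} (G : SimpleGraph α) (H : SimpleGraph β) : SimpleGraph (α ⊕ β) where
  Adj u v := match u, v with
    | Sum.inl a, Sum.inl b => G.Adj a b
    | Sum.inr a, Sum.inr b => H.Adj a b
    | _, _ => True
  symm := by
    constructor
    rintro (a | a) (b | b) h
    · exact G.symm.symm _ _ h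
    · trivial
    · trivial
    · exact H.symm.symm _ _ h
  loopless := by
    constructor
    rintro (a | a) h
    · exact G.loopless.irrefl a h
    · exact H.loopless.irrefl a h

/-- `kK2 k` : the disjoint union of `k` copies of `K₂`. -/
def kK2 (k : ℕ) : SimpleGraph (Fin k × Fin 2) where
  Adj p q := p.1 = q.1 ∧ p.2 ≠ q.2
  symm := ⟨fun p q h => ⟨h.1.symm, h.2.symm⟩⟩
  loopless := ⟨fun p h => h.2 rfl⟩

/-- `G − F`: the subgraph of `G` induced on the complement of the vertex set `F`. -/
def delVerts {W : Type*} [Fintype W] [DecidableEq W] (G : SimpleGraph W) (F : Finset W) :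
    SimpleGraph ((Fᶜ : Finset W) : Set W) :=
  G.induce ((Fᶜ : Finset W) : Set W)

theorem List.countP_eq_ncard_of_count_eq_one {α : Type*} [DecidableEq α] {l : List α}
    (hl : ∀ a, l.count a = 1) (P : α → Bool) : l.countP P = {a | P a}.ncard := by
  have hnd : (l.filter P).Nodup := (List.nodup_iff_count_le_one.mpr fun a => (hl a).le).filter P
  have hset : ((l.filter P).toFinset : Set α) = {a | P a} := by
    ext a
    simp [← List.count_pos_iff, hl a]
  rw [List.countP_eq_length_filter, ← List.toFinset_card_of_nodup hnd, ← hset,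
    Set.ncard_coe_finset]

namespace SimpleGraph

variable {V : Type*} {G : SimpleGraph V}

section

variable (T : Set V) [DecidablePred (· ∈ T)]

/-- Each dart touching the complement of `T` is charged to an endpoint there;
each visit to such a vertex is charged at most twice. -/
theorem Walk.length_add_le_countP_darts_add_two_mul_countP_support {u v : V} (p : G.Walk u v) :
    p.length + (if u ∈ T then 0 else 1) + (if v ∈ T then 0 else 1) ≤
      p.darts.countP (fun d => d.fst ∈ T ∧ d.snd ∈ T) + 2 * p.support.countP (· ∉ T) := by
  induction p with
  | nil => split_ifs <;> simp_all
  | cons h q ih =>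
    simp only [Walk.length_cons, Walk.darts_cons, Walk.support_cons, List.countP_cons]
    split_ifs at * <;> simp_all <;> omega

theorem Walk.length_le_countP_darts_add_two_mul_countP_support_tail {u : V} (p : G.Walk u u) :
    p.length ≤
      p.darts.countP (fun d => d.fst ∈ T ∧ d.snd ∈ T) + 2 * p.support.tail.countP (· ∉ T) := by
  have h := p.length_add_le_countP_darts_add_two_mul_countP_support T
  rw [← p.cons_tail_support, List.countP_cons] at h
  by_cases hu : u ∈ T <;>
    simp only [hu, not_true_eq_false, not_false_eq_true, decide_true, decide_false,
      Bool.false_eq_true, ↓reduceIte] at h <;> omega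

theorem Walk.IsTrail.countP_darts_le_ncard [Finite V] {u v : V} {p : G.Walk u v}
    (hp : p.IsTrail) :
    p.darts.countP (fun d => d.fst ∈ T ∧ d.snd ∈ T) ≤
      {e ∈ G.edgeSet | ∀ x ∈ e, x ∈ T}.ncard := by
  classical
  set l := (p.darts.filter (fun d => d.fst ∈ T ∧ d.snd ∈ T)).map Dart.edge
  have hl : l.Nodup := (List.filter_sublist.map _).nodup hp.edges_nodup
  have hsub : (l.toFinset : Set (Sym2 V)) ⊆ {e ∈ G.edgeSet | ∀ x ∈ e, x ∈ T} := by
    intro e he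
    simp only [List.coe_toFinset, Set.mem_ofPred_eq, l, List.mem_map, List.mem_filter,
      decide_eq_true_eq] at he
    obtain ⟨d, ⟨-, hdT⟩, rfl⟩ := he
    refine ⟨d.edge_mem, fun x hx => ?_⟩
    rcases Sym2.mem_iff.mp hx with rfl | rfl
    exacts [hdT.1, hdT.2]
  calc p.darts.countP (fun d => d.fst ∈ T ∧ d.snd ∈ T) = l.toFinset.card := by
        rw [List.toFinset_card_of_nodup hl, List.length_map, List.countP_eq_length_filter]
    _ ≤ _ := Set.ncard_coe_finset l.toFinset ▸ Set.ncard_le_ncard hsub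

end

theorem IsHamiltonian.ncard_le [Fintype V] [DecidableEq V] (hG : G.IsHamiltonian)
    (hV : Fintype.card V ≠ 1) (T : Set V) : T.ncard ≤ Tᶜ.ncard + {e ∈ G.edgeSet | ∀ x ∈ e, x ∈ T}.ncard := by
  classical
  obtain ⟨u, p, hp⟩ := hG hV
  have hlen := p.length_le_countP_darts_add_two_mul_countP_support_tail T
  have hdarts := hp.isCycle.isTrail.countP_darts_le_ncard T
  have htail : p.support.tail.countP (· ∉ T) = Tᶜ.ncard :=
    List.countP_eq_ncard_of_count_eq_one
      (Walk.isHamiltonianCycle_iff_isCycle_and_support_count_tail_eq_one.mp hp).2 _ |>.trans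
      (by simp [Set.compl_def])
  have hcard : p.length = T.ncard + Tᶜ.ncard := by
    rw [hp.length_eq, Set.ncard_add_ncard_compl, Nat.card_eq_fintype_card]
  omega

end SimpleGraph

theorem card_add_card_le_of_isHamiltonian_delVerts_gJoin {α β : Type*} [Fintype α] [Fintype β]
    [DecidableEq α] [DecidableEq β] [Nontrivial β] (H : SimpleGraph α) (K : SimpleGraph β)
    (F : Finset (α ⊕ β)) (hF : ∀ b, Sum.inr b ∉ F)
    (hham : (delVerts (gJoin H K) F).IsHamiltonian) :
    Fintype.card β + F.card ≤ Fintype.card α + K.edgeSet.ncard := by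
  let ι : β → ((Fᶜ : Finset (α ⊕ β)) : Set (α ⊕ β)) := fun b => ⟨Sum.inr b, by simpa using hF b⟩
  have hι : ι.Injective := fun b b' h => Sum.inr_injective (congrArg Subtype.val h)
  set T := Set.range ι
  have hT : T.ncard = Fintype.card β := by
    rw [Set.ncard_range_of_injective hι, Nat.card_eq_fintype_card]
  have hTT : T.ncard + Tᶜ.ncard = Fintype.card α + Fintype.card β - F.card := by
    rw [Set.ncard_add_ncard_compl, Nat.card_coe_set_eq, Set.ncard_coe_finset, Finset.card_compl,
      Fintype.card_sum]
  have hE : {e ∈ (delVerts (gJoin H K) F).edgeSet | ∀ x ∈ e, x ∈ T}.ncard ≤ K.edgeSet.ncard := by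
    refine (Set.ncard_le_ncard ?_).trans (Set.ncard_image_le (f := Sym2.map ι))
    rintro e ⟨he, heT⟩
    induction e using Sym2.ind with
    | h x y =>
      obtain ⟨b, rfl⟩ := heT x (Sym2.mem_mk_left x y)
      obtain ⟨b', rfl⟩ := heT y (Sym2.mem_mk_right _ y)
      exact ⟨s(b, b'), he, rfl⟩
  have hβ := Fintype.one_lt_card (α := β)
  have hV : Fintype.card ((Fᶜ : Finset (α ⊕ β)) : Set (α ⊕ β)) ≠ 1 := by
    rw [← Nat.card_eq_fintype_card, ← Set.ncard_add_ncard_compl T]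
    omega
  have := hham.ncard_le hV T
  omega

theorem edgeSet_sum_bot_top_fin_two_subset (m : ℕ) :
    ((⊥ : SimpleGraph (Fin m)) ⊕g (⊤ : SimpleGraph (Fin 2))).edgeSet ⊆ {s(.inr 0, .inr 1)} := by
  intro e he
  induction e using Sym2.ind with
  | h x y =>
    rcases x with i | i <;> rcases y with j | j <;> simp at he
    fin_cases i <;> fin_cases j <;> simp_all [Sym2.eq_swap]

theorem statement_17_general (n : ℕ) (hn8 : 8 ≤ n)
    (H : SimpleGraph (Fin (n / 2)))
    (G : SimpleGraph (Fin (n / 2) ⊕ (Fin ((n - 4) / 2) ⊕ Fin 2)))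
    (hG : G = gJoin H ((⊥ : SimpleGraph (Fin ((n - 4) / 2))) ⊕g (⊤ : SimpleGraph (Fin 2)))) :
    ¬(∀ F : Finset (Fin (n / 2) ⊕ (Fin ((n - 4) / 2) ⊕ Fin 2)), F.card ≤ 2 →
        (delVerts G F).IsHamiltonian) ∧
    (∀ a b : Fin (n / 2), a ≠ b →
      ¬(delVerts G {Sum.inl a, Sum.inl b}).IsHamiltonian) := by
  have key : ∀ a b : Fin (n / 2), a ≠ b → ¬(delVerts G {Sum.inl a, Sum.inl b}).IsHamiltonian := by
    intro a b hab hham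
    subst hG
    have : Nontrivial (Fin ((n - 4) / 2) ⊕ Fin 2) := Sum.inr_injective.nontrivial
    have hcard := card_add_card_le_of_isHamiltonian_delVerts_gJoin _ _ _ (by simp) hham
    have hedges := Set.ncard_le_ncard (edgeSet_sum_bot_top_fin_two_subset ((n - 4) / 2))
    rw [Set.ncard_singleton] at hedges
    simp only [Finset.card_pair (Sum.inl_injective.ne hab), Fintype.card_sum,
      Fintype.card_fin] at hcard
    omega
  refine ⟨fun hall => key ⟨0, by omega⟩ ⟨1, by omega⟩ (by simp [Fin.ext_iff]) (hall _ ?_), key⟩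
  exact Finset.card_le_two

/-- For even `n ≥ 8` and any `H` on `n/2` vertices, the join
`G = H ∨ (K̄_{(n−4)/2} ∪ K₂)` is not 2-vertex-fault hamiltonian: deleting any two `H`-side
vertices leaves a non-hamiltonian graph. -/
theorem statement_17 (n : ℕ) (heven : Even n) (hn8 : 8 ≤ n)
    (H : SimpleGraph (Fin (n / 2)))
    (G : SimpleGraph (Fin (n / 2) ⊕ (Fin ((n - 4) / 2) ⊕ Fin 2)))
    (hG : G = gJoin H ((⊥ : SimpleGraph (Fin ((n - 4) / 2))) ⊕g (⊤ : SimpleGraph (Fin 2)))) :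
    ¬(∀ F : Finset (Fin (n / 2) ⊕ (Fin ((n - 4) / 2) ⊕ Fin 2)), F.card ≤ 2 →
        (delVerts G F).IsHamiltonian) ∧
    (∀ a b : Fin (n / 2), a ≠ b →
      ¬(delVerts G {Sum.inl a, Sum.inl b}).IsHamiltonian) :=
  statement_17_general n hn8 H G hG
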